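/- arXiv:2602.08264 — 2 statements merged into one kernel-verified Lean document; each statement's English description precedes it below -/
import Mathlib

section
/- Let p be a prime and M ≥ 1 an integer, let (λ,θ) ∈ A, and let (λ̃,θ̃) = S₂(λ,θ). If θ̃_i = θ̃_{i+1} for some 1 ≤ i ≤ M, then λ̃_i + θ̃_i ≡ 0 (mod p). -/
open Function

/-- The state of the Serganova algorithm: a pair `(λ, θ) ∈ ℤ^M × ℤ^{M+1}`.
Indices are 0-based, so the paper's `λ_i` (for `1 ≤ i ≤ M`) is `s.1 ⟨i-1,_⟩`
and the paper's `θ_j` (for `1 ≤ j ≤ M+1`) is `s.2 ⟨j-1,_⟩`. -/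
abbrev SState (M : ℕ) := (Fin M → ℤ) × (Fin (M + 1) → ℤ)

/-- One step of the Serganova algorithm, processing the (0-based) pair `(i, j)`:
if `λ_i + θ_j ≡ 0 (mod p)` nothing changes, otherwise `λ_i` is decreased by `1`
and `θ_j` is increased by `1`. -/
def sStep (p M : ℕ) (ij : Fin M × Fin (M + 1)) (s : SState M) : SState M :=
  if (p : ℤ) ∣ s.1 ij.1 + s.2 ij.2 then s
  else (Function.update s.1 ij.1 (s.1 ij.1 - 1),
        Function.update s.2 ij.2 (s.2 ij.2 + 1))

/-- One step of the inverse algorithm, processing the (0-based) pair `(i, j)`: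
if `λ_i + θ_j ≡ 0 (mod p)` nothing changes, otherwise `λ_i` is increased by `1`
and `θ_j` is decreased by `1`. -/
def tStep (p M : ℕ) (ij : Fin M × Fin (M + 1)) (s : SState M) : SState M :=
  if (p : ℤ) ∣ s.1 ij.1 + s.2 ij.2 then s
  else (Function.update s.1 ij.1 (s.1 ij.1 + 1),
        Function.update s.2 ij.2 (s.2 ij.2 - 1))

/-- Run the Serganova algorithm along a list of pairs. -/
def sRun (p M : ℕ) (l : List (Fin M × Fin (M + 1))) (s : SState M) : SState M :=
  l.foldl (fun s ij => sStep p M ij s) s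

/-- Run the inverse algorithm along a list of pairs. -/
def tRun (p M : ℕ) (l : List (Fin M × Fin (M + 1))) (s : SState M) : SState M :=
  l.foldl (fun s ij => tStep p M ij s) s

/-- The Version 1 order on the pair set `P = {(i,j) : 0 ≤ j ≤ i ≤ M-1}` (0-based):
`j` increasing, and for fixed `j`, `i` decreasing from `M-1` down to `j`.
This is the paper's order `(M,1),(M-1,1),…,(1,1),(M,2),…,(2,2),…,(M,M)`. -/
def order1 (M : ℕ) : List (Fin M × Fin (M + 1)) :=
  (List.finRange M).flatMap fun j =>
    ((List.finRange M).reverse.filter fun i => j ≤ i).map fun i => (i, j.castSucc)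

/-- The Version 2 order on the pair set `P` (0-based):
`i` decreasing from `M-1` down to `0`, and for fixed `i`, `j` increasing from `0` to `i`.
This is the paper's order `(M,1),(M,2),…,(M,M),(M-1,1),…,(M-1,M-1),…,(1,1)`. -/
def order2 (M : ℕ) : List (Fin M × Fin (M + 1)) :=
  (List.finRange M).reverse.flatMap fun i =>
    ((List.finRange M).filter fun j => j ≤ i).map fun j => (i, j.castSucc)

/-- The Serganova map `S₁` (Version 1 order). -/
def S1 (p M : ℕ) (s : SState M) : SState M := sRun p M (order1 M) s

/-- The Serganova map `S₂` (Version 2 order). -/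
def S2 (p M : ℕ) (s : SState M) : SState M := sRun p M (order2 M) s

/-- The inverse algorithm `T₁`: inverse steps, pairs processed in reverse Version 1 order. -/
def T1 (p M : ℕ) (s : SState M) : SState M := tRun p M (order1 M).reverse s

/-- The inverse algorithm `T₂`: inverse steps, pairs processed in reverse Version 2 order. -/
def T2 (p M : ℕ) (s : SState M) : SState M := tRun p M (order2 M).reverse s

/-- The set `A` of dominant pairs: `λ_1 ≥ … ≥ λ_M` and `θ_1 ≥ … ≥ θ_{M+1}`. -/
def domA (M : ℕ) : Set (SState M) := {s | Antitone s.1 ∧ Antitone s.2}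

/-- The set `𝕄`: dominant pairs such that (in 1-based terms) for `2 ≤ i ≤ M`,
`λ_{i-1} = λ_i → p ∣ λ_i + θ_i`, and for `1 ≤ i ≤ M`, `θ_i = θ_{i+1} → p ∣ λ_i + θ_i`. -/
def setM (p M : ℕ) : Set (SState M) :=
  {s | Antitone s.1 ∧ Antitone s.2 ∧
    (∀ (i : ℕ) (hi : i + 1 < M),
      s.1 ⟨i, by omega⟩ = s.1 ⟨i + 1, hi⟩ →
        (p : ℤ) ∣ s.1 ⟨i + 1, hi⟩ + s.2 ⟨i + 1, by omega⟩) ∧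
    (∀ (i : ℕ) (hi : i < M),
      s.2 ⟨i, by omega⟩ = s.2 ⟨i + 1, by omega⟩ →
        (p : ℤ) ∣ s.1 ⟨i, hi⟩ + s.2 ⟨i, by omega⟩)}

/-!
Rows `r < i` of the Version 2 order only touch `λ_r` and columns `θ_j` with `j ≤ r < i`, so
`λ_i`, `θ_i`, `θ_{i+1}` are final once the step `(i,i)` is done. Each row keeps `θ` antitone: a
step `(i,c)` can only break this when `θ_{c-1} = θ_c`, but then the step `(i,c-1)` just before
must have been trivial, i.e. `p ∣ λ_i + θ_{c-1} = λ_i + θ_c`, and step `(i,c)` is trivial too.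
Hence `θ_i ≥ θ_{i+1}` before the step `(i,i)`; if that step acts it makes `θ_i > θ_{i+1}`, so
`θ_i = θ_{i+1}` at the end forces it to have been trivial, which is `p ∣ λ_i + θ_i`.
-/

namespace Serganova

variable {p M : ℕ}

def row2 (M : ℕ) (i : Fin M) : List (Fin M × Fin (M + 1)) :=
  ((List.finRange M).filter fun j => j ≤ i).map fun j => (i, j.castSucc)

theorem order2_eq_flatMap_row2 (M : ℕ) :
    order2 M = (List.finRange M).reverse.flatMap (row2 M) := rfl

theorem filter_le_finRange (i : Fin M) :
    (List.finRange M).filter (· ≤ i) = (List.finRange (i + 1)).map (Fin.castLE i.isLt) := by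
  refine ((List.pairwise_lt_finRange M).filter _).eq_of_mem_iff
    (List.pairwise_map.2 ((List.pairwise_lt_finRange _).imp id)) fun j => ?_
  simp only [List.mem_filter, List.mem_finRange, true_and, decide_eq_true_eq, List.mem_map]
  exact ⟨fun h => ⟨⟨j, by omega⟩, rfl⟩, by rintro ⟨k, rfl⟩; exact Nat.le_of_lt_succ k.isLt⟩

theorem row2_eq_map_finRange (i : Fin M) :
    row2 M i = (List.finRange (i + 1)).map fun k => (i, (Fin.castLE i.isLt k).castSucc) := by
  rw [row2, filter_le_finRange, List.map_map]
  rfl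

theorem mem_row2 {i : Fin M} {ij : Fin M × Fin (M + 1)} (h : ij ∈ row2 M i) :
    ij.1 = i ∧ ij.2.val ≤ i.val := by
  obtain ⟨j, hj, rfl⟩ := List.mem_map.1 h
  exact ⟨rfl, by simpa using hj⟩

theorem sRun_append (l₁ l₂ : List (Fin M × Fin (M + 1))) (s : SState M) :
    sRun p M (l₁ ++ l₂) s = sRun p M l₂ (sRun p M l₁ s) :=
  List.foldl_append

theorem sRun_fst_of_forall_ne {a : Fin M} :
    ∀ {l : List (Fin M × Fin (M + 1))} {s : SState M}, (∀ ij ∈ l, ij.1 ≠ a) →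
      (sRun p M l s).1 a = s.1 a
  | [], _, _ => rfl
  | ij :: l, s, h => by
    rw [show sRun p M (ij :: l) s = sRun p M l (sStep p M ij s) from rfl,
      sRun_fst_of_forall_ne fun ij' h' => h ij' (List.mem_cons_of_mem _ h'), sStep]
    split_ifs
    exacts [rfl, update_of_ne (h ij List.mem_cons_self).symm _ _]

theorem sRun_snd_of_forall_ne {c : Fin (M + 1)} :
    ∀ {l : List (Fin M × Fin (M + 1))} {s : SState M}, (∀ ij ∈ l, ij.2 ≠ c) →
      (sRun p M l s).2 c = s.2 c
  | [], _, _ => rfl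
  | ij :: l, s, h => by
    rw [show sRun p M (ij :: l) s = sRun p M l (sStep p M ij s) from rfl,
      sRun_snd_of_forall_ne fun ij' h' => h ij' (List.mem_cons_of_mem _ h'), sStep]
    split_ifs
    exacts [rfl, update_of_ne (h ij List.mem_cons_self).symm _ _]

/-- The invariant of row `i` just before its step at column `c`. -/
def ColumnReady (p : ℕ) (i : Fin M) (c : Fin (M + 1)) (s : SState M) : Prop :=
  Antitone s.2 ∧ ∀ c' < c, s.2 c' = s.2 c → (p : ℤ) ∣ s.1 i + s.2 c

def ThetaCongruence (p : ℕ) (i : Fin M) (s : SState M) : Prop :=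
  s.2 i.castSucc = s.2 i.succ → (p : ℤ) ∣ s.1 i + s.2 i.castSucc

theorem antitone_sStep {i : Fin M} {c : Fin (M + 1)} {s : SState M}
    (h : ColumnReady p i c s) : Antitone (sStep p M (i, c) s).2 := by
  obtain ⟨hs, hready⟩ := h
  unfold sStep
  split_ifs with hd
  · exact hs
  intro a b hab
  simp only [update_apply]
  split_ifs with hb ha ha
  · omega
  · have hac : a < c := lt_of_le_of_ne (hb ▸ hab) ha
    have := hs hac.le
    have := mt (hready a hac) hd
    omega
  · have := hs (ha ▸ hab)
    omega
  · exact hs hab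

theorem sStep_dvd_of_snd_eq {i : Fin M} {c c' : Fin (M + 1)} {s : SState M}
    (hs : Antitone s.2) (hc : c < c')
    (h : (sStep p M (i, c) s).2 c = (sStep p M (i, c) s).2 c') :
    (p : ℤ) ∣ (sStep p M (i, c) s).1 i + (sStep p M (i, c) s).2 c := by
  unfold sStep at h ⊢
  split_ifs at h ⊢ with hd
  · exact hd
  · simp only [update_self, update_of_ne hc.ne'] at h
    have := hs hc.le
    omega

theorem ColumnReady.sStep_castSucc {i j : Fin M} {s : SState M} (h : ColumnReady p i j.castSucc s) :
    ColumnReady p i j.succ (sStep p M (i, j.castSucc) s) := by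
  have hanti := antitone_sStep h
  refine ⟨hanti, fun c' hc' heq => ?_⟩
  have hle : c' ≤ j.castSucc := Fin.le_castSucc_iff.2 hc'
  have hcs : _ = _ := le_antisymm (hanti Fin.castSucc_lt_succ.le) (heq ▸ hanti hle)
  rw [hcs]
  exact sStep_dvd_of_snd_eq h.1 Fin.castSucc_lt_succ hcs.symm

theorem columnReady_sRun_prefix (i : Fin M) {s : SState M} (hs : Antitone s.2) :
    ∀ (n : ℕ) (hn : n ≤ M), ColumnReady p i ⟨n, by omega⟩
      (sRun p M ((List.finRange n).map fun k => (i, (Fin.castLE hn k).castSucc)) s)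
  | 0, _ => ⟨hs, fun c' hc' => absurd hc' (Fin.not_lt_zero c')⟩
  | n + 1, hn => by
    rw [List.finRange_succ_last, List.map_append, List.map_map, sRun_append]
    exact (columnReady_sRun_prefix i hs n (by omega)).sStep_castSucc (j := ⟨n, hn⟩)

theorem columnReady_sRun_row2 (i : Fin M) {s : SState M} (hs : Antitone s.2) :
    ColumnReady p i i.succ (sRun p M (row2 M i) s) := by
  rw [row2_eq_map_finRange]
  exact columnReady_sRun_prefix i hs _ i.isLt

theorem ColumnReady.thetaCongruence {i : Fin M} {s : SState M}
    (h : ColumnReady p i i.succ s) : ThetaCongruence p i s := fun heq =>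
  heq ▸ h.2 _ Fin.castSucc_lt_succ heq

theorem ThetaCongruence.sRun_of_lt {i : Fin M} {s : SState M} (h : ThetaCongruence p i s)
    {l : List (Fin M × Fin (M + 1))} (hl : ∀ ij ∈ l, ij.1 < i ∧ ij.2.val ≤ ij.1.val) :
    ThetaCongruence p i (sRun p M l s) := by
  have hfst : (sRun p M l s).1 i = s.1 i :=
    sRun_fst_of_forall_ne fun ij hij => (hl ij hij).1.ne
  have hsnd : ∀ c : Fin (M + 1), i.val ≤ c.val → (sRun p M l s).2 c = s.2 c := fun c hc =>
    sRun_snd_of_forall_ne fun ij hij heq => by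
      have := hl ij hij
      have : ij.1.val < i.val := this.1
      omega
  unfold ThetaCongruence
  rw [hfst, hsnd _ le_rfl, hsnd _ (Nat.le_succ _)]
  exact h

theorem sRun_flatMap_row2 : ∀ {R : List (Fin M)} {s : SState M},
    R.Pairwise (· > ·) → Antitone s.2 →
      Antitone (sRun p M (R.flatMap (row2 M)) s).2 ∧
        ∀ i ∈ R, ThetaCongruence p i (sRun p M (R.flatMap (row2 M)) s)
  | [], _, _, hs => ⟨hs, by simp⟩
  | a :: R, s, hR, hs => by
    obtain ⟨ha, hR⟩ := List.pairwise_cons.1 hR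
    have hrow := columnReady_sRun_row2 (p := p) a hs
    obtain ⟨hanti, hcong⟩ := sRun_flatMap_row2 hR hrow.1
    rw [List.flatMap_cons, sRun_append]
    refine ⟨hanti, List.forall_mem_cons.2 ⟨hrow.thetaCongruence.sRun_of_lt fun ij hij => ?_, hcong⟩⟩
    obtain ⟨r, hr, hij⟩ := List.mem_flatMap.1 hij
    obtain ⟨rfl, hle⟩ := mem_row2 hij
    exact ⟨ha _ hr, hle⟩

end Serganova

open Serganova in
theorem serganova_v2_theta_congruence_general (p M : ℕ)
    (s : SState M) (hs : s ∈ domA M) (i : Fin M)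
    (h : (S2 p M s).2 i.castSucc = (S2 p M s).2 i.succ) :
    (p : ℤ) ∣ (S2 p M s).1 i + (S2 p M s).2 i.castSucc := by
  have hrows : (List.finRange M).reverse.Pairwise (· > ·) :=
    List.pairwise_reverse.2 (List.pairwise_lt_finRange M)
  rw [S2, order2_eq_flatMap_row2] at h ⊢
  exact (sRun_flatMap_row2 hrows hs.2).2 i (by simp) h

/-- If `(λ̃,θ̃) = S₂(λ,θ)` for a dominant pair `(λ,θ)` and
`θ̃_i = θ̃_{i+1}` (1-based, `1 ≤ i ≤ M`), then `p ∣ λ̃_i + θ̃_i`. -/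
theorem serganova_v2_theta_congruence (p M : ℕ) (hp : p.Prime) (hM : 1 ≤ M)
    (s : SState M) (hs : s ∈ domA M) (i : Fin M)
    (h : (S2 p M s).2 i.castSucc = (S2 p M s).2 i.succ) :
    (p : ℤ) ∣ (S2 p M s).1 i + (S2 p M s).2 i.castSucc :=
  serganova_v2_theta_congruence_general p M s hs i h
end

section
/- Let p be a prime and M ≥ 1 an integer, and let (λ̃,θ̃) ∈ 𝕄. Then at every intermediate stage of the inverse algorithm T₁ applied to (λ̃,θ̃), the current λ-sequence is nonincreasing; in particular the λ-component of T₁(λ̃,θ̃) satisfies λ_1 ≥ λ_2 ≥ … ≥ λ_M. -/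
open Function

/-!
`T₁` runs through the columns `j = M, …, 1`, each from `i = j` up to `i = M`. A step `(i, j)`
raises `λ_i`, so it can break antitonicity only if `λ_{i-1} = λ_i`, and it is a no-op when
`p ∣ λ_i + θ_j`; so it suffices that `λ_{i-1} = λ_i → p ∣ λ_i + θ_j` before each step. At the
top of a column, `λ_{j-1}`, `λ_j` and `θ_j` have not been touched by the earlier columns, and
this is the condition defining `𝕄`. Down a column it propagates: if step `(i-1, j)` did nothing
then `p ∣ λ_{i-1} + θ_j`, and `λ_{i-1} = λ_i` gives `p ∣ λ_i + θ_j`; if it raised `λ_{i-1}`,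
then now `λ_{i-1} > λ_i`.
-/

theorem Antitone.update_add_one {ι : Type*} [PartialOrder ι] [DecidableEq ι]
    {f : ι → ℤ} (hf : Antitone f) {i : ι} (h : ∀ k < i, f i < f k) :
    Antitone (update f i (f i + 1)) := by
  intro a b hab
  rcases eq_or_ne b i with rfl | hb
  · rcases eq_or_ne a b with rfl | ha
    · rfl
    · rw [update_self, update_of_ne ha]
      exact h a (lt_of_le_of_ne hab ha)
  · rw [update_of_ne hb]
    calc f b ≤ f a := hf hab
      _ ≤ update f i (f i + 1) a := by
        rcases eq_or_ne a i with rfl | ha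
        · simp
        · rw [update_of_ne ha]

namespace Serganova

variable {p M : ℕ}

theorem tRun_cons (ij : Fin M × Fin (M + 1)) (l : List (Fin M × Fin (M + 1))) (s : SState M) :
    tRun p M (ij :: l) s = tRun p M l (tStep p M ij s) :=
  rfl

theorem tStep_fst_of_ne {i k : Fin M} (j : Fin (M + 1)) (s : SState M) (h : k ≠ i) :
    (tStep p M (i, j) s).1 k = s.1 k := by
  unfold tStep
  split_ifs
  · rfl
  · exact update_of_ne h _ _

theorem tStep_snd_of_ne (i : Fin M) {j k : Fin (M + 1)} (s : SState M) (h : k ≠ j) :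
    (tStep p M (i, j) s).2 k = s.2 k := by
  unfold tStep
  split_ifs
  · rfl
  · exact update_of_ne h _ _

theorem tRun_fst_of_forall_ne {l : List (Fin M × Fin (M + 1))} {k : Fin M} (s : SState M)
    (h : ∀ ij ∈ l, k ≠ ij.1) : (tRun p M l s).1 k = s.1 k := by
  induction l generalizing s with
  | nil => rfl
  | cons ij l ih =>
    rw [tRun_cons, ih _ fun ij' hij' => h ij' (List.mem_cons_of_mem _ hij'),
      tStep_fst_of_ne _ _ (h ij List.mem_cons_self)]

theorem tRun_snd_of_forall_ne {l : List (Fin M × Fin (M + 1))} {k : Fin (M + 1)} (s : SState M)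
    (h : ∀ ij ∈ l, k ≠ ij.2) : (tRun p M l s).2 k = s.2 k := by
  induction l generalizing s with
  | nil => rfl
  | cons ij l ih =>
    rw [tRun_cons, ih _ fun ij' hij' => h ij' (List.mem_cons_of_mem _ hij'),
      tStep_snd_of_ne _ _ (h ij List.mem_cons_self)]

def StaysAntitone (p M : ℕ) (l : List (Fin M × Fin (M + 1))) (s : SState M) : Prop :=
  ∀ k, Antitone (tRun p M (l.take k) s).1

theorem StaysAntitone.antitone {l : List (Fin M × Fin (M + 1))} {s : SState M}
    (h : StaysAntitone p M l s) : Antitone s.1 :=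
  h 0

theorem StaysAntitone.antitone_tRun {l : List (Fin M × Fin (M + 1))} {s : SState M}
    (h : StaysAntitone p M l s) : Antitone (tRun p M l s).1 := by
  simpa using h l.length

theorem staysAntitone_nil {s : SState M} : StaysAntitone p M [] s ↔ Antitone s.1 := by
  simp [StaysAntitone, tRun]

theorem staysAntitone_cons {ij : Fin M × Fin (M + 1)} {l : List (Fin M × Fin (M + 1))}
    {s : SState M} :
    StaysAntitone p M (ij :: l) s ↔ Antitone s.1 ∧ StaysAntitone p M l (tStep p M ij s) := by
  refine ⟨fun h => ⟨h.antitone, fun k => h (k + 1)⟩, fun ⟨hs, h⟩ k => ?_⟩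
  cases k with
  | zero => exact hs
  | succ k => exact h k

theorem staysAntitone_append {l₁ l₂ : List (Fin M × Fin (M + 1))} {s : SState M} :
    StaysAntitone p M (l₁ ++ l₂) s ↔
      StaysAntitone p M l₁ s ∧ StaysAntitone p M l₂ (tRun p M l₁ s) := by
  induction l₁ generalizing s with
  | nil => exact ⟨fun h => ⟨staysAntitone_nil.2 h.antitone, h⟩, And.right⟩
  | cons ij l₁ ih => simp only [List.cons_append, staysAntitone_cons, ih, tRun_cons, and_assoc]

/-- Under this condition the step `(i, j)` cannot break antitonicity of `λ`: it either does
nothing or raises an entry `λ_i` that lies strictly below all earlier entries. -/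
def SafeAt (p : ℕ) (s : SState M) (i : Fin M) (j : Fin (M + 1)) : Prop :=
  ∀ k < i, s.1 k = s.1 i → (p : ℤ) ∣ s.1 i + s.2 j

theorem antitone_tStep_fst {s : SState M} {i : Fin M} {j : Fin (M + 1)} (hs : Antitone s.1)
    (hsafe : SafeAt p s i j) : Antitone (tStep p M (i, j) s).1 := by
  unfold tStep
  split_ifs with hdvd
  · exact hs
  · exact hs.update_add_one fun k hk =>
      lt_of_le_of_ne (hs hk.le) fun heq => hdvd (hsafe k hk heq.symm)

theorem safeAt_tStep {s : SState M} {i i' : Fin M} {j : Fin (M + 1)} (hs : Antitone s.1)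
    (hsafe : SafeAt p s i j) (hi' : i'.val = i.val + 1) :
    SafeAt p (tStep p M (i, j) s) i' j := by
  have hii' : i < i' := Fin.lt_def.2 (by omega)
  have hle : ∀ {k}, k < i' → k ≤ i := fun hk =>
    Fin.le_def.2 (by rw [Fin.lt_def] at hk; omega)
  intro k hk heq
  by_cases hdvd : (p : ℤ) ∣ s.1 i + s.2 j
  · simp only [tStep, if_pos hdvd] at heq ⊢
    have hi : s.1 i = s.1 i' := le_antisymm (heq ▸ hs (hle hk)) (hs hii'.le)
    exact hi ▸ hdvd
  · exfalso
    have hstep : (tStep p M (i, j) s).1 = update s.1 i (s.1 i + 1) := by simp [tStep, hdvd]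
    have hlt : (tStep p M (i, j) s).1 i' < (tStep p M (i, j) s).1 i := by
      rw [hstep, update_self, update_of_ne hii'.ne']
      exact Int.lt_add_one_of_le (hs hii'.le)
    exact hlt.not_ge (heq ▸ antitone_tStep_fst hs hsafe (hle hk))

theorem staysAntitone_of_isChain {j : Fin (M + 1)} {i : Fin M} {l : List (Fin M)}
    {s : SState M} (hl : (i :: l).IsChain fun a b => b.val = a.val + 1) (hs : Antitone s.1)
    (hsafe : SafeAt p s i j) : StaysAntitone p M ((i :: l).map (·, j)) s := by
  induction l generalizing i s with
  | nil => exact staysAntitone_cons.2 ⟨hs, staysAntitone_nil.2 (antitone_tStep_fst hs hsafe)⟩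
  | cons i' l ih =>
    rw [List.isChain_cons_cons] at hl
    exact staysAntitone_cons.2 ⟨hs,
      ih hl.2 (antitone_tStep_fst hs hsafe) (safeAt_tStep hs hsafe hl.1)⟩

theorem map_val_filter_le_finRange (j : Fin M) :
    ((List.finRange M).filter (j ≤ ·)).map Fin.val = List.range' j (M - j) := by
  have hval : ((List.finRange M).filter (j ≤ ·)).map Fin.val =
      (List.range M).filter (j.val ≤ ·) := by
    rw [← List.map_coe_finRange_eq_range, List.filter_map]
    rfl
  rw [hval, ← List.Ico.zero_bot, List.Ico.filter_le, Nat.zero_max]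
  rfl

theorem filter_le_finRange_eq_cons (j : Fin M) :
    ∃ l, (List.finRange M).filter (j ≤ ·) = j :: l ∧
      (j :: l).IsChain fun a b => b.val = a.val + 1 := by
  have hmap := map_val_filter_le_finRange j
  have hchain : ((List.finRange M).filter (j ≤ ·)).IsChain fun a b => b.val = a.val + 1 :=
    (List.isChain_map Fin.val).1 (hmap ▸ List.isChain_range' _ _ 1)
  rw [show M - j = M - j - 1 + 1 by omega, List.range'_succ] at hmap
  obtain ⟨i, l, hl, hi, -⟩ := List.map_eq_cons_iff.1 hmap
  obtain rfl : i = j := Fin.ext hi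
  exact ⟨l, hl, hl ▸ hchain⟩

def column (M : ℕ) (j : Fin M) : List (Fin M × Fin (M + 1)) :=
  ((List.finRange M).filter (j ≤ ·)).map (·, j.castSucc)

theorem reverse_order1 (M : ℕ) :
    (order1 M).reverse = (List.finRange M).reverse.flatMap (column M) := by
  rw [order1, List.reverse_flatMap]
  congr 1
  funext j
  simp [column, List.map_reverse, List.filter_reverse]

theorem staysAntitone_column {j : Fin M} {s : SState M} (hs : Antitone s.1)
    (hsafe : SafeAt p s j j.castSucc) : StaysAntitone p M (column M j) s := by
  obtain ⟨l, hl, hchain⟩ := filter_le_finRange_eq_cons j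
  rw [column, hl]
  exact staysAntitone_of_isChain hchain hs hsafe

theorem safeAt_tRun_column {j j' : Fin M} {s : SState M} (hlt : j' < j)
    (h : SafeAt p s j' j'.castSucc) : SafeAt p (tRun p M (column M j) s) j' j'.castSucc := by
  have hfst : ∀ k ≤ j', (tRun p M (column M j) s).1 k = s.1 k := fun k hk =>
    tRun_fst_of_forall_ne s fun ij hij => by
      obtain ⟨i, hi, rfl⟩ := List.mem_map.1 hij
      exact ((hk.trans_lt hlt).trans_le (of_decide_eq_true (List.mem_filter.1 hi).2)).ne
  have hsnd : (tRun p M (column M j) s).2 j'.castSucc = s.2 j'.castSucc :=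
    tRun_snd_of_forall_ne s fun ij hij => by
      obtain ⟨i, -, rfl⟩ := List.mem_map.1 hij
      exact (Fin.castSucc_lt_castSucc_iff.2 hlt).ne
  intro k hk heq
  rw [hfst k hk.le, hfst j' le_rfl] at heq
  rw [hfst j' le_rfl, hsnd]
  exact h k hk heq

theorem staysAntitone_flatMap_column {js : List (Fin M)} {s : SState M}
    (hjs : js.Pairwise (· > ·)) (hs : Antitone s.1)
    (hsafe : ∀ j ∈ js, SafeAt p s j j.castSucc) :
    StaysAntitone p M (js.flatMap (column M)) s := by
  induction js generalizing s with
  | nil => exact staysAntitone_nil.2 hs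
  | cons j js ih =>
    rw [List.pairwise_cons] at hjs
    have hcol := staysAntitone_column hs (hsafe j List.mem_cons_self)
    rw [List.flatMap_cons, staysAntitone_append]
    exact ⟨hcol, ih hjs.2 hcol.antitone_tRun fun j' hj' =>
      safeAt_tRun_column (hjs.1 j' hj') (hsafe j' (List.mem_cons_of_mem _ hj'))⟩

theorem safeAt_of_mem_setM {s : SState M} (hs : s ∈ setM p M) (j : Fin M) :
    SafeAt p s j j.castSucc := by
  obtain ⟨hanti, -, hdvd, -⟩ := hs
  obtain ⟨_ | i, hj⟩ := j
  · exact fun k hk => (Nat.not_lt_zero _ hk).elim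
  · intro k hk heq
    refine hdvd i hj (le_antisymm ?_ (hanti (Nat.le_succ i)))
    exact heq ▸ hanti (Nat.lt_succ_iff.1 hk)

end Serganova

theorem serganova_inv1_lambda_antitone_general (p M : ℕ)
    (s : SState M) (hs : s ∈ setM p M) :
    (∀ k : ℕ, Antitone (tRun p M ((order1 M).reverse.take k) s).1) ∧
    Antitone (T1 p M s).1 := by
  have h : Serganova.StaysAntitone p M (order1 M).reverse s := by
    rw [Serganova.reverse_order1]
    exact Serganova.staysAntitone_flatMap_column
      (List.pairwise_reverse.2 (List.pairwise_lt_finRange M)) hs.1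
      fun j _ => Serganova.safeAt_of_mem_setM hs j
  exact ⟨h, h.antitone_tRun⟩

/-- At every intermediate stage of the inverse algorithm `T₁` applied
to an element of `𝕄`, the current `λ`-sequence is nonincreasing; in particular the
`λ`-component of `T₁(λ̃,θ̃)` is nonincreasing. -/
theorem serganova_inv1_lambda_antitone (p M : ℕ) (hp : p.Prime) (hM : 1 ≤ M)
    (s : SState M) (hs : s ∈ setM p M) :
    (∀ k : ℕ, Antitone (tRun p M ((order1 M).reverse.take k) s).1) ∧
    Antitone (T1 p M s).1 :=
  serganova_inv1_lambda_antitone_general p M s hs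
end
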